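/- Let A be a finite dimensional symmetric algebra over an algebraically closed field K of characteristic p > 0, with associative symmetric nondegenerate bilinear form (-,-). Let K(A) be the K-subspace of A spanned by all commutators [a,b] = ab - ba, and for n ≥ 0 set T_n(A) = { x ∈ A : x^{p^n} ∈ K(A) }. Then the orthogonal complement T_n(A)^⊥ (with respect to (-,-)) is an ideal of the center Z(A) of A. -/

import Mathlib

variable (K A : Type*) [Field K] [Ring A] [Algebra K A]

/-- The commutator subspace `K(A)`: the `K`-span of all commutators `ab - ba`. -/
def commutatorSubspace : Submodule K A :=
  Submodule.span K {x : A | ∃ a b : A, x = a * b - b * a}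

/-- `T_n(A) = { x ∈ A | x^{p^n} ∈ K(A) }`. -/
def TnSet (p n : ℕ) : Set A := {x : A | x ^ p ^ n ∈ commutatorSubspace K A}

/-- The orthogonal complement of a subset `S ⊆ A` with respect to a bilinear form. -/
def perpSet (B : A →ₗ[K] A →ₗ[K] K) (S : Set A) : Set A :=
  {y : A | ∀ x ∈ S, B x y = 0}

open Finset in
lemma pow_eq_sum_words {A : Type*} [Ring A] (a : Bool → A) (m : ℕ) :
    (a true + a false) ^ m = ∑ f : Fin m → Bool, (List.ofFn fun i => a (f i)).prod := by
  induction m with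
  | zero => simp
  | succ m ih =>
    rw [pow_succ, ih, Finset.sum_mul]
    rw [← Fintype.sum_equiv (Fin.snocEquiv (fun _ : Fin (m+1) => Bool))
      (fun x => (List.ofFn fun i => a ((Fin.snocEquiv (fun _ => Bool)) x i)).prod)
      (fun f => (List.ofFn fun i => a (f i)).prod) (fun x => rfl)]
    rw [Fintype.sum_prod_type]
    simp only [Fin.snocEquiv_apply]
    rw [Finset.sum_comm]
    refine Finset.sum_congr rfl fun g _ => ?_
    rw [Fintype.sum_bool]
    have key : ∀ b : Bool, (List.ofFn fun i : Fin (m+1) => a ((Fin.snoc g b : Fin (m+1) → Bool) i)).prod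
        = (List.ofFn fun i => a (g i)).prod * a b := by
      intro b
      rw [List.ofFn_succ']
      simp [List.concat_eq_append, Fin.snoc_castSucc, Fin.snoc_last]
    rw [key, key, mul_add, add_comm]


lemma mul_comm_mem (u v : A) : u * v - v * u ∈ commutatorSubspace K A :=
  Submodule.subset_span ⟨u, v, rfl⟩

lemma prod_sub_rotate_mem (l : List A) :
    l.prod - (l.rotate 1).prod ∈ commutatorSubspace K A := by
  cases l with
  | nil => simp
  | cons h t =>
    have : (h :: t).rotate 1 = t ++ [h] := by
      simpa using List.rotate_cons_succ t h 0
    rw [this]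
    simpa using mul_comm_mem K A h t.prod

lemma ofFn_rotate_one {m : ℕ} (hm : 0 < m) (g : ZMod m → A) :
    List.ofFn (fun i : Fin m => g (((i : ℕ) : ZMod m) + 1)) =
      (List.ofFn fun i : Fin m => g ((i : ℕ) : ZMod m)).rotate 1 := by
  apply List.ext_get
  · simp
  · intro i h1 h2
    rw [List.get_rotate]
    simp only [List.get_ofFn]
    congr 1
    have hlen : (List.ofFn fun i : Fin m => g ((i : ℕ) : ZMod m)).length = m := by simp
    simp only [hlen]
    push_cast [ZMod.natCast_mod]
    ring_nf
    congr 1 <;> simp [hlen, Fin.val_cast_of_lt, Nat.mod_eq_of_lt]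

section Frob

variable (p : ℕ) [Fact p.Prime] [CharP K p]

local notation "Q" => (A ⧸ commutatorSubspace K A)

noncomputable def phi : A →ₗ[K] (A ⧸ commutatorSubspace K A) :=
  (commutatorSubspace K A).mkQ

lemma phi_prod_rotate (l : List A) : phi K A l.prod = phi K A (l.rotate 1).prod := by
  rw [phi, Submodule.mkQ_apply, Submodule.mkQ_apply, Submodule.Quotient.eq]
  exact prod_sub_rotate_mem K A l

noncomputable def W (a : Bool → A) (f : ZMod p → Bool) : Q :=
  phi K A (List.ofFn fun i : Fin p => a (f ((i : ℕ) : ZMod p))).prod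

lemma W_rot (hp : 0 < p) (a : Bool → A) (f : ZMod p → Bool) :
    W K A p a (fun z => f (z + 1)) = W K A p a f := by
  unfold W
  rw [ofFn_rotate_one A hp (fun z => a (f z))]
  exact (phi_prod_rotate K A _).symm

lemma W_rotn (hp : 0 < p) (a : Bool → A) (f : ZMod p → Bool) (k : ℕ) :
    W K A p a (fun z => f (z + (k : ZMod p))) = W K A p a f := by
  induction k with
  | zero => simp
  | succ k ih =>
    have h1 : (fun z => f (z + ((k + 1 : ℕ) : ZMod p)))
        = (fun z => (fun w => f (w + (k : ZMod p))) (z + 1)) := by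
      funext z; push_cast; ring_nf
    rw [h1, W_rot K A p hp a (fun w => f (w + (k : ZMod p))), ih]

lemma W_rotz (hp : 0 < p) (a : Bool → A) (f : ZMod p → Bool) (k : ZMod p) :
    W K A p a (fun z => f (z + k)) = W K A p a f := by
  haveI : NeZero p := ⟨hp.ne'⟩
  have := W_rotn K A p hp a f k.val
  rwa [ZMod.natCast_val, ZMod.cast_id] at this

lemma p_smul_eq_zero (x : Q) : p • x = 0 := by
  rw [← Nat.cast_smul_eq_nsmul K, CharP.cast_eq_zero, zero_smul]

end Frob

section Orbit

variable (p : ℕ) [Fact p.Prime] [CharP K p]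

lemma orbit_sum_zero (a : Bool → A) (s : Finset (ZMod p → Bool))
    (hclosed : ∀ f ∈ s, ∀ k : ZMod p, (fun z => f (z + k)) ∈ s)
    (hnc : ∀ f ∈ s, ∃ z w, f z ≠ f w) :
    ∑ f ∈ s, W K A p a f = 0 := by
  haveI : NeZero p := ⟨(Fact.out (p := p.Prime)).pos.ne'⟩
  have hp : 0 < p := (Fact.out (p := p.Prime)).pos
  induction s using Finset.strongInduction with
  | _ s ih =>
    rcases s.eq_empty_or_nonempty with rfl | ⟨f, hf⟩
    · simp
    · have hinj : Function.Injective (fun k : ZMod p => (fun z => f (z + k))) := by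
        intro k j hkj
        by_contra hne
        have hd : k - j ≠ 0 := sub_ne_zero.mpr hne
        have hshift : ∀ z, f (z + (k - j)) = f z := by
          intro z
          have h := congrFun hkj (z - j)
          simp only at h
          have e1 : z - j + k = z + (k - j) := by ring
          have e2 : z - j + j = z := by ring
          rw [e1, e2] at h; exact h
        have hiter : ∀ (m : ℕ) (z : ZMod p), f (z + m • (k - j)) = f z := by
          intro m
          induction m with
          | zero => simp
          | succ m ihm =>
            intro z
            have e : z + (m + 1) • (k - j) = (z + (k - j)) + m • (k - j) := by
              rw [succ_nsmul]; ring
            rw [e, ihm, hshift]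
        have hconst : ∀ z w : ZMod p, f z = f w := by
          intro z w
          have h := hiter (((w - z) * (k - j)⁻¹).val) z
          rw [nsmul_eq_mul, ZMod.natCast_val, ZMod.cast_id] at h
          rw [mul_assoc, inv_mul_cancel₀ hd, mul_one] at h
          rw [show z + (w - z) = w by ring] at h
          exact h.symm
        obtain ⟨z, w, hzw⟩ := hnc f hf
        exact hzw (hconst z w)
      set O : Finset (ZMod p → Bool) :=
        Finset.image (fun k : ZMod p => fun z => f (z + k)) Finset.univ with hO
      have hOs : O ⊆ s := by
        intro g hg
        rw [hO, Finset.mem_image] at hg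
        obtain ⟨k, _, rfl⟩ := hg
        exact hclosed f hf k
      have hfO : f ∈ O := by
        rw [hO, Finset.mem_image]
        exact ⟨0, Finset.mem_univ _, by funext z; simp⟩
      have hOsum : ∑ g ∈ O, W K A p a g = 0 := by
        rw [hO, Finset.sum_image (fun x _ y _ h => hinj h)]
        rw [Finset.sum_congr rfl (fun k _ => W_rotz K A p hp a f k), Finset.sum_const]
        rw [Finset.card_univ, ZMod.card]
        exact p_smul_eq_zero K A p _
      have hssub : s \ O ⊂ s := Finset.sdiff_ssubset hOs ⟨f, hfO⟩
      have hrec : ∑ g ∈ s \ O, W K A p a g = 0 := by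
        refine ih (s \ O) hssub ?_ ?_
        · intro g hg k
          rw [Finset.mem_sdiff] at hg
          rw [Finset.mem_sdiff]
          refine ⟨hclosed g hg.1 k, fun hmem => hg.2 ?_⟩
          rw [hO, Finset.mem_image] at hmem
          obtain ⟨j, _, hj⟩ := hmem
          rw [hO, Finset.mem_image]
          refine ⟨j - k, Finset.mem_univ _, ?_⟩
          funext z
          have := congrFun hj (z - k)
          rw [show z - k + k = z by ring] at this
          rw [← this]
          congr 1; ring
        · intro g hg
          exact hnc g (Finset.mem_sdiff.mp hg).1
      rw [← Finset.sum_sdiff hOs, hrec, hOsum, add_zero]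

end Orbit

section Frob2

variable (p : ℕ) [Fact p.Prime] [CharP K p]

noncomputable def finZModEquiv (hp : 0 < p) : Fin p ≃ ZMod p :=
  haveI : NeZero p := ⟨hp.ne'⟩
  { toFun := fun i => ((i : ℕ) : ZMod p)
    invFun := fun z => ⟨z.val, z.val_lt⟩
    left_inv := fun i => by
      ext; simp [ZMod.val_cast_of_lt i.isLt]
    right_inv := fun z => by simp [ZMod.natCast_val, ZMod.cast_id] }

lemma phi_add_pow (x y : A) :
    phi K A ((x + y) ^ p) = phi K A (x ^ p) + phi K A (y ^ p) := by
  haveI : NeZero p := ⟨(Fact.out (p := p.Prime)).pos.ne'⟩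
  have hp : 0 < p := (Fact.out (p := p.Prime)).pos
  set a : Bool → A := fun b => if b then x else y with ha
  have hxy : x + y = a true + a false := by simp [ha]
  rw [hxy, pow_eq_sum_words a p, map_sum]
  have hreidx : ∑ g : Fin p → Bool, phi K A (List.ofFn fun i => a (g i)).prod
      = ∑ f : ZMod p → Bool, W K A p a f := by
    refine (Fintype.sum_equiv ((finZModEquiv p hp).arrowCongr (Equiv.refl Bool)).symm _ _
      (fun f => rfl)).symm
  rw [hreidx]
  set ct : ZMod p → Bool := fun _ => true with hct
  set cf : ZMod p → Bool := fun _ => false with hcf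
  have hne : ct ≠ cf := by
    intro h; simpa using congrFun h 0
  have hpair : ({ct, cf} : Finset (ZMod p → Bool)) ⊆ Finset.univ := Finset.subset_univ _
  rw [← Finset.sum_sdiff hpair]
  have hrest : ∑ f ∈ Finset.univ \ {ct, cf}, W K A p a f = 0 := by
    refine orbit_sum_zero K A p a _ ?_ ?_
    · intro f hf k
      rw [Finset.mem_sdiff, Finset.mem_insert, Finset.mem_singleton] at hf ⊢
      refine ⟨Finset.mem_univ _, fun h => hf.2 ?_⟩
      rcases h with h | h
      · left; funext w
        have := congrFun h (w - k)
        simpa [hct, show w - k + k = w by ring] using this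
      · right; funext w
        have := congrFun h (w - k)
        simpa [hcf, show w - k + k = w by ring] using this
    · intro f hf
      rw [Finset.mem_sdiff, Finset.mem_insert, Finset.mem_singleton] at hf
      by_contra hcon
      push_neg at hcon
      refine hf.2 ?_
      cases hb : f 0 with
      | true => left; funext z; rw [hct]; rw [← hb]; exact hcon z 0
      | false => right; funext z; rw [hcf]; rw [← hb]; exact hcon z 0
  rw [hrest, zero_add, Finset.sum_pair hne]
  have hWconst : ∀ b : Bool, W K A p a (fun _ => b) = phi K A ((a b) ^ p) := by
    intro b
    unfold W
    congr 1
    rw [List.ofFn_const, List.prod_replicate]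
  rw [hWconst, hWconst]
  simp [ha]

lemma phi_smul_pow (c : K) (x : A) :
    phi K A ((c • x) ^ p) = c ^ p • phi K A (x ^ p) := by
  rw [smul_pow, map_smul]

lemma phi_neg_pow (w : A) : phi K A ((-w) ^ p) = - phi K A (w ^ p) := by
  rcases (Fact.out (p := p.Prime)).eq_two_or_odd' with h2 | hodd
  · subst h2
    rw [neg_sq]
    have h := p_smul_eq_zero K A 2 (phi K A (w ^ 2))
    rw [two_smul] at h
    exact (neg_eq_of_add_eq_zero_left h).symm
  · rw [hodd.neg_pow, map_neg]

lemma phi_mul_comm (u v : A) : phi K A (u * v) = phi K A (v * u) := by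
  rw [phi, Submodule.mkQ_apply, Submodule.mkQ_apply, Submodule.Quotient.eq]
  exact mul_comm_mem K A u v

lemma phi_mul_pow_comm (u v : A) : phi K A ((u * v) ^ p) = phi K A ((v * u) ^ p) := by
  have hp : 0 < p := (Fact.out (p := p.Prime)).pos
  obtain ⟨m, rfl⟩ : ∃ m, p = m + 1 := ⟨p - 1, (Nat.succ_pred_eq_of_pos hp).symm⟩
  have hsc : SemiconjBy v ((u * v) ^ m) ((v * u) ^ m) :=
    (SemiconjBy.pow_right (by unfold SemiconjBy; rw [← mul_assoc]) m)
  have h1 : (u * v) ^ (m + 1) = u * ((v * u) ^ m * v) := by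
    rw [pow_succ', mul_assoc, hsc.eq]
  have h2 : (v * u) ^ (m + 1) = ((v * u) ^ m * v) * u := by
    rw [pow_succ, mul_assoc]
  rw [h1, h2, phi_mul_comm]

lemma phi_comm_pow (u v : A) : phi K A ((u * v - v * u) ^ p) = 0 := by
  have h := phi_add_pow K A p (u * v) (-(v * u))
  rw [sub_eq_add_neg]
  rw [h, phi_neg_pow, phi_mul_pow_comm K A p u v, add_neg_cancel]

lemma pow_p_mem {x : A} (hx : x ∈ commutatorSubspace K A) :
    x ^ p ∈ commutatorSubspace K A := by
  have hp : 0 < p := (Fact.out (p := p.Prime)).pos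
  have key : phi K A (x ^ p) = 0 := by
    induction hx using Submodule.span_induction with
    | mem x hx =>
      obtain ⟨u, v, rfl⟩ := hx
      exact phi_comm_pow K A p u v
    | zero => rw [zero_pow hp.ne', map_zero]
    | add x y _ _ ihx ihy => rw [phi_add_pow, ihx, ihy, add_zero]
    | smul c x _ ihx => rw [phi_smul_pow, ihx, smul_zero]
  rwa [phi, Submodule.mkQ_apply, Submodule.Quotient.mk_eq_zero] at key

lemma pow_p_pow_mem {x : A} (hx : x ∈ commutatorSubspace K A) (n : ℕ) :
    x ^ p ^ n ∈ commutatorSubspace K A := by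
  induction n with
  | zero => simpa using hx
  | succ n ih =>
    rw [pow_succ, pow_mul]
    exact pow_p_mem K A p ih

end Frob2

lemma mul_central_mem {x c : A} (hx : x ∈ commutatorSubspace K A)
    (hc : ∀ b : A, b * c = c * b) : x * c ∈ commutatorSubspace K A := by
  induction hx using Submodule.span_induction with
  | mem y hy =>
    obtain ⟨u, v, rfl⟩ := hy
    have : (u * v - v * u) * c = u * (v * c) - (v * c) * u := by
      rw [sub_mul, mul_assoc, mul_assoc, mul_assoc, ← hc u, ← mul_assoc, ← mul_assoc]
    rw [this]
    exact mul_comm_mem K A u (v * c)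
  | zero => rw [zero_mul]; exact Submodule.zero_mem _
  | add y z _ _ ihy ihz => rw [add_mul]; exact Submodule.add_mem _ ihy ihz
  | smul a y _ ihy => rw [smul_mul_assoc]; exact Submodule.smul_mem _ a ihy


/-- for a finite dimensional symmetric algebra `A` over an algebraically
closed field of characteristic `p > 0`, with associative symmetric nondegenerate
bilinear form `B`, the orthogonal complement `T_n(A)^⊥` is an ideal of the center
`Z(A)` of `A` (in particular it is contained in the center). -/
theorem TnPerp_isIdeal_of_center {K A : Type*} [Field K] [IsAlgClosed K]
    [Ring A] [Algebra K A] [FiniteDimensional K A]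
    (p : ℕ) [CharP K p] (hp : 0 < p)
    (B : A →ₗ[K] A →ₗ[K] K)
    (hassoc : ∀ a b c : A, B (a * b) c = B a (b * c))
    (hsymm : ∀ a b : A, B a b = B b a)
    (hnd : ∀ a : A, (∀ b : A, B a b = 0) → a = 0)
    (n : ℕ) :
    ∃ J : Ideal (Subalgebra.center K A),
      (fun z : Subalgebra.center K A => (z : A)) '' (J : Set _) =
        perpSet K A B (TnSet K A p n) := by
  haveI : NeZero p := ⟨hp.ne'⟩
  haveI : Fact p.Prime := CharP.char_is_prime_of_pos K p
  set P := perpSet K A B (TnSet K A p n) with hP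
  have hcommT : ∀ u v : A, u * v - v * u ∈ TnSet K A p n := fun u v =>
    pow_p_pow_mem K A p (mul_comm_mem K A u v) n
  have hPcent : ∀ y ∈ P, ∀ b : A, b * y = y * b := by
    intro y hy b
    have key : ∀ a : A, B (b * y - y * b) a = 0 := by
      intro a
      have e1 : B a (b * y) = B (a * b) y := (hassoc a b y).symm
      have e2 : B a (y * b) = B (b * a) y := by
        rw [← hassoc a y b, hsymm (a * y) b, ← hassoc b a y]
      have e3 : B a (b * y - y * b) = B (a * b - b * a) y := by
        rw [map_sub (B a), map_sub B, LinearMap.sub_apply, e1, e2]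
      rw [hsymm, e3]
      exact hy _ (hcommT a b)
    exact sub_eq_zero.mp (hnd _ key)
  have hPmul : ∀ y ∈ P, ∀ z : A, (∀ b : A, b * z = z * b) → z * y ∈ P := by
    intro y hy z hz x hx
    rw [← hassoc]
    apply hy
    show (x * z) ^ p ^ n ∈ commutatorSubspace K A
    have hcx : Commute x z := (hz x)
    rw [hcx.mul_pow]
    exact mul_central_mem K A hx (fun b => (Commute.pow_right (hz b) (p ^ n)))
  refine ⟨{ carrier := {z : Subalgebra.center K A | (z : A) ∈ P},
            add_mem' := ?_, zero_mem' := ?_, smul_mem' := ?_ }, ?_⟩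
  · intro a b ha hb
    intro x hx
    show B x ((a : A) + (b : A)) = 0
    rw [map_add]
    rw [ha x hx, hb x hx, add_zero]
  · intro x hx
    show B x ((0 : A)) = 0
    rw [map_zero]
  · intro c z hz
    intro x hx
    show B x ((c : A) * (z : A)) = 0
    exact hPmul (z : A) hz (c : A) (Subalgebra.mem_center_iff.mp c.2) x hx
  · ext y
    constructor
    · rintro ⟨z, hz, rfl⟩
      exact hz
    · intro hy
      exact ⟨⟨y, Subalgebra.mem_center_iff.mpr (hPcent y hy)⟩, hy, rfl⟩
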